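/- Let p be a probability distribution on a finite set A and let p̂_M be the empirical distribution of M i.i.d. samples drawn from p. Then for every ε > 0, P(d_KL(p̂_M ‖ p) ≥ ε) ≤ (M+1)^{|A|} e^{-Mε}. -/

import Mathlib

/-!
Method of types. A sample sequence of type `k` (letter counts) has probability
`∏ p_a ^ k_a ≤ ∏ q_a ^ k_a · exp (-M · d_KL(q ‖ p))` with `q = k / M`; since the whole type class has
`q`-probability at most one, its `p`-probability is at most `exp (-M · d_KL(q ‖ p))`. The event
`d_KL(p̂ ‖ p) ≥ ε` is a union of type classes with `d_KL(q ‖ p) ≥ ε`, and there are at most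
`(M + 1) ^ |A|` types.
-/

open MeasureTheory ProbabilityTheory Finset Real

namespace MethodOfTypes

variable {ι A : Type*}

def typeCount [Fintype ι] [DecidableEq A] (x : ι → A) (a : A) : ℕ := #{i | x i = a}

noncomputable def empiricalDist [Fintype ι] [DecidableEq A] (x : ι → A) (a : A) : ℝ :=
  typeCount x a / Fintype.card ι

def typeClass [Fintype ι] [DecidableEq ι] [Fintype A] [DecidableEq A] (k : A → ℕ) :
    Finset (ι → A) :=
  {x | typeCount x = k}

noncomputable def klDiv [Fintype A] (q p : A → ℝ) : ℝ := ∑ a, q a * log (q a / p a)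

section Counting

variable [Fintype ι] [Fintype A] [DecidableEq A]

lemma mem_typeClass [DecidableEq ι] {k : A → ℕ} {x : ι → A} :
    x ∈ typeClass k ↔ typeCount x = k := by
  simp [typeClass]

lemma sum_typeCount (x : ι → A) : ∑ a, typeCount x a = Fintype.card ι :=
  (card_eq_sum_card_fiberwise fun i _ => mem_univ (x i)).symm

lemma prod_comp_eq_prod_pow_typeCount {M : Type*} [CommMonoid M] (f : A → M) (x : ι → A) :
    ∏ i, f (x i) = ∏ a, f a ^ typeCount x a := by
  rw [← prod_fiberwise' univ x f]
  exact prod_congr rfl fun a _ => prod_const _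

lemma sum_typeClass_prod_comp [DecidableEq ι] {R : Type*} [CommSemiring R] (f : A → R)
    (k : A → ℕ) :
    ∑ x ∈ typeClass (ι := ι) k, ∏ i, f (x i) = #(typeClass (ι := ι) k) * ∏ a, f a ^ k a := by
  rw [← nsmul_eq_mul, ← sum_const]
  refine sum_congr rfl fun x hx => ?_
  rw [prod_comp_eq_prod_pow_typeCount, mem_typeClass.1 hx]

lemma card_typeClass_mul_prod_pow_le_one [DecidableEq ι] {q : A → ℝ} (hq0 : ∀ a, 0 ≤ q a)
    (hq1 : ∑ a, q a ≤ 1) (k : A → ℕ) : #(typeClass (ι := ι) k) * ∏ a, q a ^ k a ≤ 1 :=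
  calc #(typeClass (ι := ι) k) * ∏ a, q a ^ k a
      = ∑ x ∈ typeClass k, ∏ i, q (x i) := (sum_typeClass_prod_comp q k).symm
    _ ≤ ∑ x : ι → A, ∏ i, q (x i) :=
        sum_le_sum_of_subset_of_nonneg (subset_univ _) fun x _ _ => prod_nonneg fun i _ => hq0 _
    _ = (∑ a, q a) ^ Fintype.card ι := by
        rw [← Fintype.prod_sum (fun _ a => q a), prod_const, card_univ]
    _ ≤ 1 := pow_le_one₀ (sum_nonneg fun a _ => hq0 a) hq1

end Counting

lemma pow_le_pow_mul_exp_neg_mul_log_div {p q : ℝ} (hp : 0 ≤ p) (hq : 0 < q) (n : ℕ) :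
    p ^ n ≤ q ^ n * exp (-(n * log (q / p))) := by
  rcases hp.eq_or_lt with rfl | hp
  · rcases n.eq_zero_or_pos with rfl | hn
    · simp
    · rw [zero_pow hn.ne']; positivity
  · have hexponent : -(n * log (q / p)) = log ((p / q) ^ n) := by
      rw [log_pow, ← inv_div q p, log_inv]; ring
    rw [hexponent, exp_log (by positivity), div_pow, mul_div_cancel₀ _ (by positivity)]

lemma prod_pow_le_prod_pow_mul_exp_neg_klDiv [Fintype A] {p : A → ℝ} (hp : ∀ a, 0 ≤ p a)
    {N : ℕ} {k : A → ℕ} (hk : ∀ a, k a ≤ N) :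
    ∏ a, p a ^ k a ≤
      (∏ a, ((k a : ℝ) / N) ^ k a) * exp (-(N * klDiv (fun a => (k a : ℝ) / N) p)) := by
  rw [klDiv, mul_sum, ← sum_neg_distrib, exp_sum, ← prod_mul_distrib]
  refine prod_le_prod (fun a _ => pow_nonneg (hp a) _) fun a _ => ?_
  rcases (k a).eq_zero_or_pos with hka | hka
  · simp [hka]
  · have hN : (0 : ℝ) < N := by exact_mod_cast hka.trans_le (hk a)
    rw [← mul_assoc, mul_div_cancel₀ _ hN.ne']
    exact pow_le_pow_mul_exp_neg_mul_log_div (hp a) (by positivity) (k a)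

section Sanov

variable [Fintype ι] [DecidableEq ι] [Fintype A] [DecidableEq A] {p : A → ℝ}

lemma sum_typeClass_prod_le_exp_neg_klDiv (hp : ∀ a, 0 ≤ p a) (k : A → ℕ) :
    ∑ x ∈ typeClass (ι := ι) k, ∏ i, p (x i)
      ≤ exp (-(Fintype.card ι * klDiv (fun a => (k a : ℝ) / Fintype.card ι) p)) := by
  rcases (typeClass (ι := ι) k).eq_empty_or_nonempty with hempty | ⟨x, hx⟩
  · rw [hempty, sum_empty]; positivity
  obtain rfl := mem_typeClass.1 hx
  set N := Fintype.card ι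
  set q : A → ℝ := fun a => (typeCount x a : ℝ) / N
  have hq1 : ∑ a, q a ≤ 1 := by
    rw [← sum_div, ← Nat.cast_sum, sum_typeCount]
    exact div_self_le_one _
  calc ∑ y ∈ typeClass (typeCount x), ∏ i, p (y i)
      = #(typeClass (ι := ι) (typeCount x)) * ∏ a, p a ^ typeCount x a :=
        sum_typeClass_prod_comp p _
    _ ≤ #(typeClass (ι := ι) (typeCount x)) *
          ((∏ a, q a ^ typeCount x a) * exp (-(N * klDiv q p))) :=
        mul_le_mul_of_nonneg_left
          (prod_pow_le_prod_pow_mul_exp_neg_klDiv hp fun a => card_filter_le _ _)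
          (Nat.cast_nonneg _)
    _ ≤ exp (-(N * klDiv q p)) := by
        rw [← mul_assoc]
        exact mul_le_of_le_one_left (exp_pos _).le
          (card_typeClass_mul_prod_pow_le_one (fun a => by positivity) hq1 _)

lemma sum_prod_le_card_pow_mul_exp_neg (hp : ∀ a, 0 ≤ p a) (ε : ℝ) :
    ∑ x ∈ ({x | ε ≤ klDiv (empiricalDist x) p} : Finset (ι → A)), ∏ i, p (x i)
      ≤ (Fintype.card ι + 1) ^ Fintype.card A * exp (-(Fintype.card ι * ε)) := by
  set N := Fintype.card ι
  set T : Finset (A → ℕ) := Fintype.piFinset fun _ => range (N + 1)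
  have htypes : ∀ x : ι → A, typeCount x ∈ T := fun x =>
    Fintype.mem_piFinset.2 fun a => mem_range.2 (Nat.lt_succ_of_le (card_filter_le _ _))
  rw [← sum_fiberwise_of_maps_to (g := typeCount) (t := T) fun x _ => htypes x]
  calc ∑ k ∈ T, ∑ x ∈ {x | ε ≤ klDiv (empiricalDist x) p} with typeCount x = k, ∏ i, p (x i)
      ≤ ∑ k ∈ T, exp (-(N * ε)) := sum_le_sum fun k _ => ?_
    _ = (N + 1) ^ Fintype.card A * exp (-(N * ε)) := by simp [T]
  by_cases hk : ε ≤ klDiv (fun a => (k a : ℝ) / N) p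
  · calc _ ≤ ∑ x ∈ typeClass k, ∏ i, p (x i) :=
          sum_le_sum_of_subset_of_nonneg (fun x hx => mem_typeClass.2 (mem_filter.1 hx).2)
            fun x _ _ => prod_nonneg fun i _ => hp _
      _ ≤ exp (-(N * klDiv (fun a => (k a : ℝ) / N) p)) :=
          sum_typeClass_prod_le_exp_neg_klDiv hp k
      _ ≤ exp (-(N * ε)) :=
          exp_le_exp.2 (neg_le_neg (mul_le_mul_of_nonneg_left hk (Nat.cast_nonneg _)))
  · rw [filter_false_of_mem, sum_empty]
    · positivity
    rintro x hx rfl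
    exact hk (mem_filter.1 hx).2

end Sanov

end MethodOfTypes

lemma ProbabilityTheory.iIndepFun.measure_sample_mem_le {ι A Ω : Type*} [Fintype ι]
    [MeasurableSpace A] [MeasurableSingletonClass A] [MeasurableSpace Ω] {P : Measure Ω}
    {X : ι → Ω → A} (hX : iIndepFun X P) {p : A → ℝ} (hp : ∀ a, 0 ≤ p a)
    (hlaw : ∀ i a, P (X i ⁻¹' {a}) = ENNReal.ofReal (p a)) (S : Finset (ι → A)) :
    P {ω | (fun i => X i ω) ∈ S} ≤ ENNReal.ofReal (∑ x ∈ S, ∏ i, p (x i)) := by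
  have hcylinder : ∀ x : ι → A, P (⋂ i, X i ⁻¹' {x i}) = ENNReal.ofReal (∏ i, p (x i)) := by
    intro x
    rw [hX.meas_iInter fun i => ⟨{x i}, measurableSet_singleton _, rfl⟩,
      ENNReal.ofReal_prod_of_nonneg fun i _ => hp _]
    exact prod_congr rfl fun i _ => hlaw i (x i)
  calc P {ω | (fun i => X i ω) ∈ S} ≤ P (⋃ x ∈ S, ⋂ i, X i ⁻¹' {x i}) :=
        measure_mono fun ω hω => Set.mem_iUnion₂.2 ⟨_, hω, Set.mem_iInter.2 fun i => rfl⟩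
    _ ≤ ∑ x ∈ S, P (⋂ i, X i ⁻¹' {x i}) := measure_biUnion_finset_le _ _
    _ = ENNReal.ofReal (∑ x ∈ S, ∏ i, p (x i)) := by
        rw [ENNReal.ofReal_sum_of_nonneg fun x _ => prod_nonneg fun i _ => hp _]
        exact sum_congr rfl fun x _ => hcylinder x

open MethodOfTypes

theorem sanov_finite_general {A : Type*} [Fintype A] [DecidableEq A]
    [MeasurableSpace A] [MeasurableSingletonClass A]
    {Ω : Type*} [MeasurableSpace Ω] (P : Measure Ω)
    (M : ℕ) (X : Fin M → Ω → A)
    (hiid : iIndepFun X P)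
    (p : A → ℝ) (hp0 : ∀ a, 0 ≤ p a)
    (hlaw : ∀ m a, P (X m ⁻¹' {a}) = ENNReal.ofReal (p a))
    (ε : ℝ)
    (phat : Ω → A → ℝ)
    (hphat : ∀ ω a, phat ω a
      = (1 / (M : ℝ)) * ∑ m, (if X m ω = a then (1 : ℝ) else 0)) :
    P {ω | ε ≤ ∑ a, phat ω a * Real.log (phat ω a / p a)}
      ≤ ENNReal.ofReal (((M : ℝ) + 1) ^ (Fintype.card A)
          * Real.exp (-(M * ε))) := by
  have hphat_eq : ∀ ω, phat ω = empiricalDist fun m => X m ω := fun ω => funext fun a => by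
    rw [hphat, sum_boole, empiricalDist, typeCount, Fintype.card_fin, one_div, inv_mul_eq_div]
  let S : Finset (Fin M → A) := {x | ε ≤ klDiv (empiricalDist x) p}
  calc P {ω | ε ≤ ∑ a, phat ω a * log (phat ω a / p a)}
      ≤ P {ω | (fun m => X m ω) ∈ S} :=
        measure_mono fun ω hω => mem_filter.2 ⟨mem_univ _, by simpa [hphat_eq, klDiv] using hω⟩
    _ ≤ ENNReal.ofReal (∑ x ∈ S, ∏ m, p (x m)) := hiid.measure_sample_mem_le hp0 hlaw S
    _ ≤ _ := ENNReal.ofReal_le_ofReal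
        (by simpa using sum_prod_le_card_pow_mul_exp_neg (ι := Fin M) hp0 ε)

/-- Sanov's theorem on a finite alphabet (method-of-types bound): if
`X 1, …, X M` are i.i.d. samples from a distribution `p` on a finite set `A`,
and `p̂` denotes their empirical distribution, then for every `ε > 0`,
`P(d_KL(p̂ ‖ p) ≥ ε) ≤ (M+1)^{|A|} e^{-Mε}`. -/
theorem sanov_finite {A : Type*} [Fintype A] [DecidableEq A]
    [MeasurableSpace A] [MeasurableSingletonClass A]
    {Ω : Type*} [MeasurableSpace Ω] (P : Measure Ω) [IsProbabilityMeasure P]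
    (M : ℕ) (hM : 1 ≤ M) (X : Fin M → Ω → A)
    (hmeas : ∀ m, Measurable (X m))
    (hiid : iIndepFun X P)
    (p : A → ℝ) (hp0 : ∀ a, 0 ≤ p a) (hp1 : ∑ a, p a = 1)
    (hlaw : ∀ m a, P (X m ⁻¹' {a}) = ENNReal.ofReal (p a))
    (ε : ℝ) (hε : 0 < ε)
    (phat : Ω → A → ℝ)
    (hphat : ∀ ω a, phat ω a
      = (1 / (M : ℝ)) * ∑ m, (if X m ω = a then (1 : ℝ) else 0)) :
    P {ω | ε ≤ ∑ a, phat ω a * Real.log (phat ω a / p a)}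
      ≤ ENNReal.ofReal (((M : ℝ) + 1) ^ (Fintype.card A)
          * Real.exp (-(M * ε))) :=
  sanov_finite_general P M X hiid p hp0 hlaw ε phat hphat
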